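/- Every standard cCSP process term P satisfies the healthiness condition: there exists a trace p (a possibly empty sequence of normal events) such that p⟨✓⟩ ∈ T(P) or p⟨!⟩ ∈ T(P); in particular T(P) is nonempty. -/
import Mathlib


namespace CCSP

/-- Terminal events Ω = {✓, !, ?}. -/
inductive Omega : Type
  | tick | bang | quest
deriving DecidableEq

/-- Events: normal events from Σ or terminal events from Ω. -/
inductive Ev (σ : Type) : Type
  | norm (a : σ)
  | term (ω : Omega)

/-- Standard cCSP process terms (with the null process 0). -/
inductive Proc (σ : Type) : Type
  | zero
  | atom (a : σ)
  | skip
  | throw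
  | yield
  | seq (P Q : Proc σ)
  | choice (P Q : Proc σ)
  | par (P Q : Proc σ)

open Proc Ev Omega

/-- Synchronisation of terminal events: ω ∈ ω₁ & ω₂. -/
inductive Sync : Omega → Omega → Omega → Prop
  | tick : Sync .tick .tick .tick
  | bangL (ω : Omega) : Sync .bang ω .bang
  | bangR (ω : Omega) : Sync ω .bang .bang
  | quest : Sync .quest .quest .quest
  | questTick : Sync .quest .tick .tick
  | tickQuest : Sync .tick .quest .tick

variable {σ : Type}

/-- Labelled transition system for standard processes. -/
inductive Step : Proc σ → Ev σ → Proc σ → Prop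
  | atom (a : σ) : Step (atom a) (norm a) skip
  | skip : Step skip (term .tick) zero
  | throw : Step throw (term .bang) zero
  | yieldQ : Step yield (term .quest) zero
  | yieldT : Step yield (term .tick) zero
  | seqN {P P' Q : Proc σ} {a : σ} :
      Step P (norm a) P' → Step (seq P Q) (norm a) (seq P' Q)
  | seqT {P Q R : Proc σ} {e : Ev σ} :
      Step P (term .tick) zero → Step Q e R → Step (seq P Q) e R
  | seqA {P Q : Proc σ} {ω : Omega} :
      Step P (term ω) zero → ω ≠ .tick → Step (seq P Q) (term ω) zero
  | chL {P Q R : Proc σ} {e : Ev σ} : Step P e R → Step (choice P Q) e R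
  | chR {P Q R : Proc σ} {e : Ev σ} : Step Q e R → Step (choice P Q) e R
  | parL {P P' Q : Proc σ} {a : σ} :
      Step P (norm a) P' → Step (par P Q) (norm a) (par P' Q)
  | parR {P Q Q' : Proc σ} {a : σ} :
      Step Q (norm a) Q' → Step (par P Q) (norm a) (par P Q')
  | parT {P Q : Proc σ} {ω₁ ω₂ ω : Omega} :
      Step P (term ω₁) zero → Step Q (term ω₂) zero → Sync ω₁ ω₂ ω →
      Step (par P Q) (term ω) zero

/-- A complete trace: a sequence of normal events followed by one terminal event. -/
abbrev Trace (σ : Type) := List σ × Omega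

/-- Lifted transition relation over sequences of normal events ending in ω. -/
def Lift : Proc σ → List σ → Omega → Proc σ → Prop
  | P, [], ω, Q => Step P (term ω) Q
  | P, a :: t, ω, Q => ∃ P', Step P (norm a) P' ∧ Lift P' t ω Q

/-- Lifted transition relation over complete traces. -/
def LiftT (P : Proc σ) (t : Trace σ) (Q : Proc σ) : Prop := Lift P t.1 t.2 Q

/-- Derived traces: DT(P) = {t | P —t→ 0}. -/
def DT (P : Proc σ) : Set (Trace σ) := {t | LiftT P t zero}

/-- Trace sequential composition: p ; q. -/
def tseq (p q : Trace σ) : Trace σ :=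
  if p.2 = Omega.tick then (p.1 ++ q.1, q.2) else p

/-- Prefixing a normal event to a trace. -/
def tcons (a : σ) (p : Trace σ) : Trace σ := (a :: p.1, p.2)

/-- Interleaving of finite sequences: `Inter p q t` means t ∈ p ||| q. -/
inductive Inter : List σ → List σ → List σ → Prop
  | nil : Inter [] [] []
  | left {p q t : List σ} {a : σ} : Inter p q t → Inter (a :: p) q (a :: t)
  | right {p q t : List σ} {a : σ} : Inter p q t → Inter p (a :: q) (a :: t)

/-- Trace parallel composition: interleaving of the normal parts followed by
    synchronisation of terminal events. -/
def tpar (p q : Trace σ) : Set (Trace σ) :=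
  {t | Inter p.1 q.1 t.1 ∧ Sync p.2 q.2 t.2}

/-- Denotational trace semantics of standard processes. -/
def T : Proc σ → Set (Trace σ)
  | .zero => ∅
  | .atom a => {([a], .tick)}
  | .skip => {([], .tick)}
  | .throw => {([], .bang)}
  | .yield => {([], .quest), ([], .tick)}
  | .seq P Q => {t | ∃ p ∈ T P, ∃ q ∈ T Q, t = tseq p q}
  | .choice P Q => T P ∪ T Q
  | .par P Q => {t | ∃ p ∈ T P, ∃ q ∈ T Q, t ∈ tpar p q}

/-- P is a process term of the language (built from atoms, SKIP, THROW, YIELD,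
    sequential composition, choice and parallel composition; not 0). -/
def IsTerm : Proc σ → Prop
  | .zero => False
  | .atom _ => True
  | .skip => True
  | .throw => True
  | .yield => True
  | .seq P Q => IsTerm P ∧ IsTerm Q
  | .choice P Q => IsTerm P ∧ IsTerm Q
  | .par P Q => IsTerm P ∧ IsTerm Q

theorem inter_append (p q : List σ) : Inter p q (p ++ q) := by
  induction p with
  | nil =>
    induction q with
    | nil => exact Inter.nil
    | cons a q ih => exact Inter.right ih
  | cons a p ih => exact Inter.left ih

theorem standard_healthiness_aux {σ : Type} (P : Proc σ) (hP : IsTerm P) :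
    ∃ p : List σ, (p, Omega.tick) ∈ T P ∨ (p, Omega.bang) ∈ T P := by
  induction P with
  | zero => exact absurd hP id
  | atom a => exact ⟨[a], Or.inl rfl⟩
  | skip => exact ⟨[], Or.inl rfl⟩
  | throw => exact ⟨[], Or.inr rfl⟩
  | yield => exact ⟨[], Or.inl (Or.inr rfl)⟩
  | seq P Q ihP ihQ =>
    obtain ⟨p, hp⟩ := ihP hP.1
    obtain ⟨q, hq⟩ := ihQ hP.2
    cases hp with
    | inl hp =>
      cases hq with
      | inl hq =>
        exact ⟨p ++ q, Or.inl ⟨(p, .tick), hp, (q, .tick), hq, by simp [tseq]⟩⟩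
      | inr hq =>
        exact ⟨p ++ q, Or.inr ⟨(p, .tick), hp, (q, .bang), hq, by simp [tseq]⟩⟩
    | inr hp =>
      cases hq with
      | inl hq =>
        exact ⟨p, Or.inr ⟨(p, .bang), hp, (q, .tick), hq, by simp [tseq]⟩⟩
      | inr hq =>
        exact ⟨p, Or.inr ⟨(p, .bang), hp, (q, .bang), hq, by simp [tseq]⟩⟩
  | choice P Q ihP ihQ =>
    obtain ⟨p, hp⟩ := ihP hP.1
    exact ⟨p, hp.imp Or.inl Or.inl⟩
  | par P Q ihP ihQ =>
    obtain ⟨p, hp⟩ := ihP hP.1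
    obtain ⟨q, hq⟩ := ihQ hP.2
    cases hp with
    | inl hp =>
      cases hq with
      | inl hq =>
        exact ⟨p ++ q, Or.inl ⟨(p, .tick), hp, (q, .tick), hq,
          inter_append p q, Sync.tick⟩⟩
      | inr hq =>
        exact ⟨p ++ q, Or.inr ⟨(p, .tick), hp, (q, .bang), hq,
          inter_append p q, Sync.bangR _⟩⟩
    | inr hp =>
      cases hq with
      | inl hq =>
        exact ⟨p ++ q, Or.inr ⟨(p, .bang), hp, (q, .tick), hq,
          inter_append p q, Sync.bangL _⟩⟩
      | inr hq =>
        exact ⟨p ++ q, Or.inr ⟨(p, .bang), hp, (q, .bang), hq,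
          inter_append p q, Sync.bangL _⟩⟩

/-- healthiness condition for standard processes. -/
theorem standard_healthiness {σ : Type} (P : Proc σ) (hP : IsTerm P) :
    (∃ p : List σ, (p, Omega.tick) ∈ T P ∨ (p, Omega.bang) ∈ T P) ∧
    (T P).Nonempty := by
  obtain ⟨p, hp⟩ := standard_healthiness_aux P hP
  exact ⟨⟨p, hp⟩, hp.elim (fun h => ⟨_, h⟩) (fun h => ⟨_, h⟩)⟩
end CCSP
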